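/- Let W ∈ ℝ^{m×m} have all simple eigenvalues and let A ∈ ℝ^{n×n}, and suppose W ⊗ A satisfies the UEPP. For any nonzero eigenvalue λ of W ⊗ A with unique factorization λ = λ_W · λ_A (λ_W ∈ spectrum(W), λ_A ∈ spectrum(A)), the geometric multiplicity of λ as an eigenvalue of W ⊗ A equals the geometric multiplicity of λ_A as an eigenvalue of A. -/

import Mathlib

open Matrix Kronecker

noncomputable section

def cmat {ι : Type*} (M : Matrix ι ι ℝ) : Matrix ι ι ℂ :=
  M.map (algebraMap ℝ ℂ)

def IsEig {ι : Type*} [Fintype ι] (M : Matrix ι ι ℂ) (μ : ℂ) : Prop :=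
  ∃ v : ι → ℂ, v ≠ 0 ∧ M.mulVec v = μ • v

def UEPP {m n : ℕ} (W : Matrix (Fin m) (Fin m) ℂ) (A : Matrix (Fin n) (Fin n) ℂ) : Prop :=
  ∀ lam : ℂ, lam ≠ 0 → IsEig (W ⊗ₖ A) lam →
    (∃ μ ν : ℂ, IsEig W μ ∧ IsEig A ν ∧ lam = μ * ν) ∧
    (∀ μ ν μ' ν' : ℂ, IsEig W μ → IsEig A ν → IsEig W μ' → IsEig A ν' →
      lam = μ * ν → lam = μ' * ν' → μ = μ' ∧ ν = ν')

/-- Geometric multiplicity: dimension of the kernel of `M - λI` over `ℂ`. -/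
def geomMult {ι : Type*} [Fintype ι] [DecidableEq ι] (M : Matrix ι ι ℂ) (lam : ℂ) : ℕ :=
  Module.finrank ℂ (LinearMap.ker (Matrix.toLin' (M - lam • (1 : Matrix ι ι ℂ))))

/-!
Since the eigenvalues of `W` are distinct, `W` has an eigenbasis, i.e. `W = P D P⁻¹` with
`D = diagonal d`, and then `W ⊗ A = (P ⊗ 1) (D ⊗ A) (P ⊗ 1)⁻¹`. The matrix `D ⊗ A` is block
diagonal with blocks `d i • A`, so `geomMult (W ⊗ A) lam = ∑ i, geomMult (d i • A) lam`.
A nonzero summand makes `lam / d i` an eigenvalue of `A` with `lam = d i * (lam / d i)`, so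
`d i = lamW` by the UEPP; as the `d i` are distinct only one block survives, and it contributes
`geomMult (lamW • A) (lamW * lamA) = geomMult A lamA`.
-/

open Module Module.End Polynomial

section MatrixLemmas

variable {K ι : Type*} [Field K] [Fintype ι] [DecidableEq ι]

theorem Matrix.exists_basis_mulVec_eq_smul [IsAlgClosed K] (M : Matrix ι ι K)
    (h : M.charpoly.roots.Nodup) :
    ∃ (d : ι → K) (b : Basis ι K (ι → K)), Function.Injective d ∧ ∀ i, M *ᵥ b i = d i • b i := by
  classical
  set s := M.charpoly.roots.toFinset
  have hcard : Fintype.card s = Fintype.card ι := by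
    rw [Fintype.card_coe, Multiset.toFinset_card_of_nodup h, IsAlgClosed.card_roots_eq_natDegree,
      charpoly_natDegree_eq_dim]
  have hvec (μ : s) : ∃ v, HasEigenvector (toLin' M) μ v := by
    refine HasEigenvalue.exists_hasEigenvector ?_
    rw [hasEigenvalue_iff_isRoot_charpoly, Matrix.charpoly_toLin']
    exact isRoot_of_mem_roots (Multiset.mem_toFinset.1 μ.2)
  choose v hv using hvec
  have hli : LinearIndependent K v :=
    eigenvectors_linearIndependent' _ _ Subtype.val_injective v hv
  let e := Fintype.equivOfCardEq hcard
  refine ⟨fun i => e.symm i, (basisOfLinearIndependentOfCardEqFinrank' v hli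
    (by rw [hcard, finrank_fintype_fun_eq_card])).reindex e, ?_, fun i => ?_⟩
  · exact Subtype.val_injective.comp e.symm.injective
  · simpa using mem_eigenspace_iff.1 (hv (e.symm i)).1

theorem Matrix.eq_mul_diagonal_mul_of_basis {M : Matrix ι ι K} {d : ι → K} (b : Basis ι K (ι → K))
    (hb : ∀ i, M *ᵥ b i = d i • b i) :
    M = (Pi.basisFun K ι).toMatrix b * diagonal d * b.toMatrix (Pi.basisFun K ι) := by
  have hcols : M * (Pi.basisFun K ι).toMatrix b = (Pi.basisFun K ι).toMatrix b * diagonal d := by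
    ext k i
    rw [Matrix.mul_diagonal, Matrix.mul_apply]
    simpa [Module.Basis.toMatrix_apply, mulVec, dotProduct, mul_comm]
      using congr_fun (hb i) k
  rw [← hcols, Matrix.mul_assoc, Module.Basis.toMatrix_mul_toMatrix_flip, Matrix.mul_one]

theorem Matrix.diagonal_kronecker_mulVec_apply {R κ : Type*} [CommSemiring R] [Fintype κ]
    (d : ι → R) (A : Matrix κ κ R) (z : ι × κ → R) (i : ι) (j : κ) :
    (diagonal d ⊗ₖ A *ᵥ z) (i, j) = ((d i • A) *ᵥ fun l => z (i, l)) j := by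
  simp [mulVec, dotProduct, Fintype.sum_prod_type, diagonal_apply, mul_assoc]

theorem Matrix.mem_ker_toLin'_sub_smul_one_iff {R : Type*} [CommRing R] (M : Matrix ι ι R)
    (lam : R) (v : ι → R) :
    v ∈ LinearMap.ker (toLin' (M - lam • (1 : Matrix ι ι R))) ↔ M *ᵥ v = lam • v := by
  rw [LinearMap.mem_ker, toLin'_apply, sub_mulVec, smul_mulVec, one_mulVec, sub_eq_zero]

end MatrixLemmas

section GeomMult

variable {ι κ : Type*} [Fintype ι] [DecidableEq ι] [Fintype κ] [DecidableEq κ]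

theorem geomMult_pos_iff (M : Matrix ι ι ℂ) (lam : ℂ) : 0 < geomMult M lam ↔ IsEig M lam := by
  rw [geomMult, Module.finrank_pos_iff_exists_ne_zero]
  simp only [Subtype.exists, mem_ker_toLin'_sub_smul_one_iff, ne_eq, Submodule.mk_eq_zero]
  exact ⟨fun ⟨v, hv, hv0⟩ => ⟨v, hv0, hv⟩, fun ⟨v, hv0, hv⟩ => ⟨v, hv, hv0⟩⟩

theorem geomMult_add_rank (M : Matrix ι ι ℂ) (lam : ℂ) :
    geomMult M lam + (M - lam • (1 : Matrix ι ι ℂ)).rank = Fintype.card ι := by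
  rw [geomMult, rank, add_comm, ← toLin'_apply', LinearMap.finrank_range_add_finrank_ker,
    Module.finrank_fintype_fun_eq_card]

theorem geomMult_mul_mul {P Q : Matrix ι ι ℂ} (hPQ : P * Q = 1) (M : Matrix ι ι ℂ) (lam : ℂ) :
    geomMult (P * M * Q) lam = geomMult M lam := by
  have hconj : P * M * Q - lam • (1 : Matrix ι ι ℂ) = P * (M - lam • 1) * Q := by
    rw [Matrix.mul_sub, Matrix.sub_mul, Matrix.mul_smul, Matrix.smul_mul, Matrix.mul_one, hPQ]
  have hrank : (P * M * Q - lam • (1 : Matrix ι ι ℂ)).rank = (M - lam • 1).rank := by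
    rw [hconj, rank_mul_eq_left_of_isUnit_det _ _ (isUnit_det_of_left_inverse hPQ),
      rank_mul_eq_right_of_isUnit_det _ _ (isUnit_det_of_right_inverse hPQ)]
  have h₁ := geomMult_add_rank (P * M * Q) lam
  have h₂ := geomMult_add_rank M lam
  omega

theorem geomMult_smul_mul {c : ℂ} (hc : c ≠ 0) (M : Matrix ι ι ℂ) (lam : ℂ) :
    geomMult (c • M) (c * lam) = geomMult M lam := by
  rw [geomMult, geomMult, mul_smul, ← smul_sub, map_smul, LinearMap.ker_smul _ _ hc]

theorem mem_ker_diagonal_kronecker_iff (d : ι → ℂ) (A : Matrix κ κ ℂ) (lam : ℂ) (z : ι × κ → ℂ) :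
    z ∈ LinearMap.ker (toLin' (diagonal d ⊗ₖ A - lam • (1 : Matrix (ι × κ) (ι × κ) ℂ))) ↔
      ∀ i, (fun j => z (i, j)) ∈ LinearMap.ker (toLin' (d i • A - lam • (1 : Matrix κ κ ℂ))) := by
  simp only [mem_ker_toLin'_sub_smul_one_iff, funext_iff, Prod.forall,
    diagonal_kronecker_mulVec_apply, Pi.smul_apply]

theorem geomMult_diagonal_kronecker (d : ι → ℂ) (A : Matrix κ κ ℂ) (lam : ℂ) :
    geomMult (diagonal d ⊗ₖ A) lam = ∑ i, geomMult (d i • A) lam := by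
  let e : LinearMap.ker (toLin' (diagonal d ⊗ₖ A - lam • (1 : Matrix (ι × κ) (ι × κ) ℂ))) ≃ₗ[ℂ]
      ∀ i, LinearMap.ker (toLin' (d i • A - lam • (1 : Matrix κ κ ℂ))) :=
    { toFun z i := ⟨fun j => z.1 (i, j), (mem_ker_diagonal_kronecker_iff d A lam z).1 z.2 i⟩
      invFun y := ⟨fun p => (y p.1).1 p.2,
        (mem_ker_diagonal_kronecker_iff d A lam _).2 fun i => (y i).2⟩
      map_add' _ _ := rfl
      map_smul' _ _ := rfl
      left_inv _ := rfl
      right_inv _ := rfl }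
  exact e.finrank_eq.trans (Module.finrank_pi_fintype ℂ)

theorem geomMult_kronecker_of_mulVec_eq_smul {W : Matrix ι ι ℂ} {d : ι → ℂ}
    (b : Basis ι ℂ (ι → ℂ)) (hb : ∀ i, W *ᵥ b i = d i • b i) (A : Matrix κ κ ℂ) (lam : ℂ) :
    geomMult (W ⊗ₖ A) lam = ∑ i, geomMult (d i • A) lam := by
  set P := (Pi.basisFun ℂ ι).toMatrix b
  set Q := b.toMatrix (Pi.basisFun ℂ ι)
  have hPQ : P ⊗ₖ (1 : Matrix κ κ ℂ) * Q ⊗ₖ 1 = 1 := by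
    rw [← mul_kronecker_mul, Module.Basis.toMatrix_mul_toMatrix_flip, Matrix.mul_one,
      one_kronecker_one]
  have hW : W ⊗ₖ A = P ⊗ₖ 1 * (diagonal d ⊗ₖ A) * Q ⊗ₖ 1 := by
    rw [← mul_kronecker_mul, ← mul_kronecker_mul, Matrix.one_mul, Matrix.mul_one,
      ← eq_mul_diagonal_mul_of_basis b hb]
  rw [hW, geomMult_mul_mul hPQ, geomMult_diagonal_kronecker]

end GeomMult

theorem nodup_roots_charpoly_of_isEig {ι : Type*} [Fintype ι] [DecidableEq ι] {M : Matrix ι ι ℂ}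
    (hsimple : ∀ μ : ℂ, IsEig M μ → M.charpoly.rootMultiplicity μ = 1) :
    M.charpoly.roots.Nodup := by
  refine Multiset.nodup_iff_count_le_one.2 fun μ => ?_
  rw [count_roots]
  by_cases hμ : M.charpoly.IsRoot μ
  · rw [← charpoly_toLin', ← hasEigenvalue_iff_isRoot_charpoly] at hμ
    obtain ⟨v, hv, hv0⟩ := hμ.exists_hasEigenvector
    exact (hsimple μ ⟨v, hv0, mem_eigenspace_iff.1 hv⟩).le
  · simp [rootMultiplicity_eq_zero hμ]

theorem UEPP.eq_of_isEig_smul {m n : ℕ} {W : Matrix (Fin m) (Fin m) ℂ}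
    {A : Matrix (Fin n) (Fin n) ℂ} (huepp : UEPP W A) {lam lamW lamA μ : ℂ} (hlam : lam ≠ 0)
    (hEig : IsEig (W ⊗ₖ A) lam) (hW : IsEig W lamW) (hA : IsEig A lamA)
    (hfac : lam = lamW * lamA) (hμ : IsEig W μ) (hμA : IsEig (μ • A) lam) : μ = lamW := by
  obtain ⟨v, hv0, hv⟩ := hμA
  rw [smul_mulVec] at hv
  have hμ0 : μ ≠ 0 := by
    rintro rfl
    rw [zero_smul, eq_comm, smul_eq_zero] at hv
    exact hv.elim hlam hv0
  have hAv : A *ᵥ v = (lam / μ) • v := by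
    rw [div_eq_inv_mul, mul_smul, ← hv, smul_smul, inv_mul_cancel₀ hμ0, one_smul]
  exact ((huepp lam hlam hEig).2 μ (lam / μ) lamW lamA hμ ⟨v, hv0, hAv⟩ hW hA
    (mul_div_cancel₀ lam hμ0).symm hfac).1

/-- Under simplicity of the eigenvalues of `W` and the UEPP, the geometric multiplicity of a
nonzero eigenvalue `λ = λ_W · λ_A` of `W ⊗ A` equals the geometric multiplicity of `λ_A`
as an eigenvalue of `A`. -/
theorem stmt3 (m n : ℕ) (W : Matrix (Fin m) (Fin m) ℝ) (A : Matrix (Fin n) (Fin n) ℝ)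
    (hsimple : ∀ μ : ℂ, IsEig (cmat W) μ → (cmat W).charpoly.rootMultiplicity μ = 1)
    (huepp : UEPP (cmat W) (cmat A))
    (lam lamW lamA : ℂ) (hlam : lam ≠ 0)
    (hEig : IsEig (cmat W ⊗ₖ cmat A) lam)
    (hW : IsEig (cmat W) lamW) (hA : IsEig (cmat A) lamA)
    (hfac : lam = lamW * lamA) :
    geomMult (cmat W ⊗ₖ cmat A) lam = geomMult (cmat A) lamA := by
  obtain ⟨d, b, hd, hb⟩ :=
    (cmat W).exists_basis_mulVec_eq_smul (nodup_roots_charpoly_of_isEig hsimple)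
  have hsum := geomMult_kronecker_of_mulVec_eq_smul b hb (cmat A) lam
  have hblock (i : Fin m) (hi : 0 < geomMult (d i • cmat A) lam) : d i = lamW :=
    huepp.eq_of_isEig_smul hlam hEig hW hA hfac ⟨b i, b.ne_zero i, hb i⟩
      ((geomMult_pos_iff _ _).1 hi)
  obtain ⟨i₀, -, hi₀⟩ := Finset.sum_pos_iff.1 (hsum ▸ (geomMult_pos_iff _ _).2 hEig)
  have hvanish (i : Fin m) (_ : i ∈ Finset.univ) (hi : i ≠ i₀) :
      geomMult (d i • cmat A) lam = 0 :=
    Nat.eq_zero_of_not_pos fun hpos => hi (hd ((hblock i hpos).trans (hblock i₀ hi₀).symm))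
  rw [hsum, Finset.sum_eq_single i₀ hvanish (by simp), hblock i₀ hi₀, hfac,
    geomMult_smul_mul (left_ne_zero_of_mul (hfac ▸ hlam))]
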